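/- For q ≥ 1/2, the maximum of the ramification function over all (m+1)-colored rooted trees of order at most q equals ⌊q + 1/2⌋: max{𝔯(τ) : τ ∈ T, ρ(τ) ≤ q} = ⌊q + 1/2⌋, where m ≥ 1. -/

import Mathlib

inductive CTree (m : ℕ) : Type
  | node : Fin (m + 1) → List (CTree m) → CTree m

namespace CTree

variable {m : ℕ}

def rho : CTree m → ℚ
  | .node l ts => (if (l : ℕ) = 0 then 1 else 1/2) + (ts.attach.map (fun t => rho t.1)).sum
decreasing_by
  all_goals try simp only [CTree.node.sizeOf_spec, List.cons.sizeOf_spec, List.nil.sizeOf_spec]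
  all_goals try have := List.sizeOf_lt_of_mem t.2
  all_goals omega

def height : CTree m → ℕ
  | .node _ ts => 1 + (ts.attach.map (fun t => height t.1)).foldr max 0
decreasing_by
  all_goals try simp only [CTree.node.sizeOf_spec, List.cons.sizeOf_spec, List.nil.sizeOf_spec]
  all_goals try have := List.sizeOf_lt_of_mem t.2
  all_goals omega

def ram : CTree m → ℕ
  | .node _ [] => 1
  | .node _ [t] => ram t
  | .node _ ts => 1 + (ts.attach.map (fun t => ram t.1)).foldr max 0
decreasing_by
  all_goals try simp only [CTree.node.sizeOf_spec, List.cons.sizeOf_spec, List.nil.sizeOf_spec]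
  all_goals try have := List.sizeOf_lt_of_mem t.2
  all_goals omega

def dbl : CTree m → ℕ
  | .node _ [] => 1
  | .node _ ts =>
      let ds := ts.attach.map (fun t => dbl t.1)
      let M := ds.foldr max 0
      if 2 ≤ ds.count M then M + 1 else M
decreasing_by
  all_goals try simp only [CTree.node.sizeOf_spec, List.cons.sizeOf_spec, List.nil.sizeOf_spec]
  all_goals try have := List.sizeOf_lt_of_mem t.2
  all_goals omega


end CTree

/-
Every tree has order at least `1/2`. At a node with two or more children, the root and a second
child therefore add at least `1` to the order of the child `t` of maximal ramification, and
induction gives `𝔯(τ) ≤ ρ(τ) + 1/2`. Conversely, a chain of `n` stochastic nodes, each carrying an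
extra stochastic leaf, has order `n + 1/2` and ramification `n + 1`, so the bound is attained.
-/

namespace CTree

variable {m : ℕ}

@[elab_as_elim]
theorem inductionOn {motive : CTree m → Prop} (τ : CTree m)
    (node : ∀ l ts, (∀ t ∈ ts, motive t) → motive (.node l ts)) : motive τ := by
  induction τ using CTree.rec (motive_2 := fun ts => ∀ t ∈ ts, motive t) with
  | node l ts ih => exact node l ts ih
  | nil => simp_all
  | cons t ts iht ihts =>
    rename_i s hs
    rcases List.mem_cons.1 hs with rfl | hs
    exacts [iht, ihts s hs]

theorem rho_node (l : Fin (m + 1)) (ts : List (CTree m)) :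
    rho (node l ts) = (if (l : ℕ) = 0 then 1 else 1/2) + (ts.map rho).sum := by
  simp [rho]

theorem ram_node_nil (l : Fin (m + 1)) : ram (node l []) = 1 := by
  rw [ram]

theorem ram_node_singleton (l : Fin (m + 1)) (t : CTree m) : ram (node l [t]) = ram t := by
  rw [ram]

theorem ram_node_cons_cons (l : Fin (m + 1)) (a b : CTree m) (rest : List (CTree m)) :
    ram (node l (a :: b :: rest)) = 1 + ((a :: b :: rest).map ram).foldr max 0 := by
  simp [ram]

theorem half_le_rho (τ : CTree m) : 1/2 ≤ rho τ := by
  induction τ using inductionOn with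
  | node l ts ih =>
    have hsum : (0 : ℚ) ≤ (ts.map rho).sum :=
      List.sum_nonneg (by simpa using fun t ht => (one_half_pos.trans_le (ih t ht)).le)
    rw [rho_node]
    split_ifs <;> linarith

theorem rho_le_sum (ts : List (CTree m)) {t : CTree m} (ht : t ∈ ts) :
    rho t ≤ (ts.map rho).sum :=
  List.single_le_sum (by simpa using fun s _ => (one_half_pos.trans_le (half_le_rho s)).le)
    _ (List.mem_map_of_mem ht)

theorem rho_add_half_le_sum {a b t : CTree m} {rest : List (CTree m)}
    (ht : t ∈ a :: b :: rest) : rho t + 1/2 ≤ ((a :: b :: rest).map rho).sum := by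
  have hb := rho_le_sum (b :: rest) List.mem_cons_self
  rcases List.mem_cons.1 ht with rfl | ht
  · simp only [List.map_cons, List.sum_cons] at hb ⊢
    linarith [half_le_rho b]
  · have := rho_le_sum (b :: rest) ht
    simp only [List.map_cons, List.sum_cons] at this ⊢
    linarith [half_le_rho a]

theorem exists_mem_foldr_max_map_eq {α : Type*} (f : α → ℕ) {l : List α} (hl : l ≠ []) :
    ∃ a ∈ l, (l.map f).foldr max 0 = f a := by
  have := List.maximum_mem (List.foldr_max_of_ne_nil (l := l.map f) (by simpa using hl)).symm
  simpa [eq_comm] using this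

theorem ram_le_rho_add_half (τ : CTree m) : (ram τ : ℚ) ≤ rho τ + 1/2 := by
  induction τ using inductionOn with
  | node l ts ih =>
    have hroot : (1/2 : ℚ) ≤ if (l : ℕ) = 0 then 1 else 1/2 := by split_ifs <;> norm_num
    rw [rho_node]
    match ts, ih with
    | [], _ =>
      rw [ram_node_nil, List.map_nil, List.sum_nil, Nat.cast_one]
      linarith
    | [t], ih =>
      simp only [ram_node_singleton, List.map_cons, List.map_nil, List.sum_cons, List.sum_nil]
      linarith [ih t List.mem_cons_self]
    | a :: b :: rest, ih =>
      obtain ⟨t, ht, hmax⟩ := exists_mem_foldr_max_map_eq ram (List.cons_ne_nil a (b :: rest))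
      rw [ram_node_cons_cons, hmax]
      push_cast
      linarith [ih t ht, rho_add_half_le_sum ht]

def caterpillar (m : ℕ) : ℕ → CTree m
  | 0 => node (Fin.last m) []
  | n + 1 => node (Fin.last m) [caterpillar m n, node (Fin.last m) []]

theorem rho_caterpillar (hm : 1 ≤ m) (n : ℕ) : rho (caterpillar m n) = n + 1/2 := by
  have hleaf : rho (node (Fin.last m) []) = 1/2 := by
    simp [rho_node, show m ≠ 0 by omega]
  induction n with
  | zero => simpa [caterpillar] using hleaf
  | succ n ih =>
    rw [caterpillar, rho_node]
    simp [ih, hleaf, show m ≠ 0 by omega]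
    ring

theorem ram_caterpillar (n : ℕ) : ram (caterpillar m n) = n + 1 := by
  induction n with
  | zero => exact ram_node_nil _
  | succ n ih =>
    rw [caterpillar, ram_node_cons_cons]
    simp [ih, ram_node_nil]
    omega

end CTree

open CTree in
theorem stmt4 (m : ℕ) (hm : 1 ≤ m) (q : ℚ) (hq : 1/2 ≤ q) :
    IsGreatest {k : ℕ | ∃ τ : CTree m, rho τ ≤ q ∧ ram τ = k} (⌊q + 1/2⌋.toNat) := by
  rw [Int.floor_toNat]
  have hpos : 1 ≤ ⌊q + 1/2⌋₊ := Nat.le_floor (by push_cast; linarith)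
  have hfloor : (⌊q + 1/2⌋₊ : ℚ) ≤ q + 1/2 := Nat.floor_le (by linarith)
  refine ⟨⟨caterpillar m (⌊q + 1/2⌋₊ - 1), ?_, by rw [ram_caterpillar]; omega⟩, ?_⟩
  · rw [rho_caterpillar hm, Nat.cast_sub hpos]
    push_cast
    linarith
  · rintro k ⟨τ, hτ, rfl⟩
    exact Nat.le_floor (by linarith [ram_le_rho_add_half τ])
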